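/- Let B be a basic graph with an adapted complex structure J, and let B̃ be an expansion of B, obtained by repeatedly choosing a vertex u and a pair of vertices v, w with w = Jv and u ∉ {v, w}, and adding the two edges uv and uw (no edge added twice). Extend J to an almost complex structure J̃ on 𝔫_{B̃} by keeping J on the vertices and old edges and, after fixing a labeling v_1, …, v_n of the vertices, setting for each added pair of edges e_{i,k}, e_{j,k} with Jv_i = v_j: J̃ e_{i,k} = e_{j,k} if k < i,j or k > i,j, and J̃ e_{i,k} = −e_{j,k} if i < k < j or j < k < i (and J̃² = −id). Then J̃ is integrable (its Nijenhuis tensor vanishes), hence J̃ is an adapted complex structure on B̃ extending J. -/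

import Mathlib

/-!  Framework: the 2-step nilpotent Lie algebra `𝔫_G` associated to a finite simple
graph `G` (Dani–Mainkar construction), and adapted complex structures on it. -/

open scoped BigOperators

namespace GraphLie

variable {V : Type*} [Fintype V] [LinearOrder V]

/-- The underlying real vector space of the Lie algebra `𝔫_G` associated to a graph `G`:
real-valued functions on its basis `V ⊕ G.edgeSet` (vertices and edges). -/
abbrev Niln (G : SimpleGraph V) : Type _ := (V ⊕ G.edgeSet) → ℝ

variable (G : SimpleGraph V) [DecidableRel G.Adj]

/-- The basis vector of `𝔫_G` corresponding to the vertex `v`. -/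
noncomputable def vtx (v : V) : Niln G := Pi.single (Sum.inl v) 1

/-- The basis vector of `𝔫_G` corresponding to the edge `e`. -/
noncomputable def edg (e : G.edgeSet) : Niln G := Pi.single (Sum.inr e) 1

/-- The basis vector of `𝔫_G` corresponding to a vertex or an edge. -/
noncomputable def basisVec (b : V ⊕ G.edgeSet) : Niln G := Pi.single b 1

/-- The bracket of two vertex generators: for adjacent vertices `i < j` (with respect to
the chosen labeling of the vertices) `[v_i, v_j] = e_{i,j}` and `[v_j, v_i] = -e_{i,j}`;
non-adjacent vertices commute. -/
noncomputable def bracketVtx (i j : V) : Niln G :=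
  if h : G.Adj i j then
    (if i < j then edg G ⟨s(i, j), G.mem_edgeSet.mpr h⟩
     else - edg G ⟨s(i, j), G.mem_edgeSet.mpr h⟩)
  else 0

/-- The Lie bracket of `𝔫_G`, extended bilinearly from the generators; all the
edge generators are central. -/
noncomputable def bracket (x y : Niln G) : Niln G :=
  ∑ i : V, ∑ j : V, (x (Sum.inl i) * y (Sum.inl j)) • bracketVtx G i j

/-- An adapted complex structure on the graph `G`: a linear endomorphism `J` of `𝔫_G`
with `J ∘ J = -id`, whose Nijenhuis tensor vanishes, and which sends each basis vector
(vertex or edge) to plus or minus a basis vector. -/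
structure AdaptedCS : Type _ where
  J : Niln G →ₗ[ℝ] Niln G
  j_squared : ∀ x, J (J x) = -x
  integrable : ∀ x y,
    bracket G x y + J (bracket G (J x) y + bracket G x (J y)) - bracket G (J x) (J y) = 0
  adapted : ∀ b : V ⊕ G.edgeSet,
    (∃ b', J (basisVec G b) = basisVec G b') ∨ (∃ b', J (basisVec G b) = - basisVec G b')

variable {G}

/-- An edge of `G` joining vertices `v` and `w` is distinguished if `Jv = w` or `Jw = v`. -/
def AdaptedCS.Distinguished (Jc : AdaptedCS G) (e : G.edgeSet) : Prop :=
  ∃ v w : V, (e : Sym2 V) = s(v, w) ∧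
    (Jc.J (vtx G v) = vtx G w ∨ Jc.J (vtx G w) = vtx G v)

end GraphLie

namespace GraphLie

variable {V : Type*} [Fintype V] [LinearOrder V]

/-- A graph is *basic* if it is a disjoint union of copies of `A₁` (two vertices, no
edge), `A₂` (three vertices, exactly one edge) and `A₃` (four vertices, two edges
sharing no endpoint). -/
def IsBasic (H : SimpleGraph V) : Prop :=
  ∃ P : Set (Set V),
    (∀ v : V, ∃! p, p ∈ P ∧ v ∈ p) ∧
    ∀ p ∈ P,
      (∃ a b : V, a ≠ b ∧ p = {a, b} ∧
        H.neighborSet a = ∅ ∧ H.neighborSet b = ∅) ∨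
      (∃ a b c : V, p = {a, b, c} ∧
        H.neighborSet a = {b} ∧ H.neighborSet b = {a} ∧ H.neighborSet c = ∅) ∨
      (∃ a b c d : V, p = {a, b, c, d} ∧
        a ≠ c ∧ a ≠ d ∧ b ≠ c ∧ b ≠ d ∧
        H.neighborSet a = {b} ∧ H.neighborSet b = {a} ∧
        H.neighborSet c = {d} ∧ H.neighborSet d = {c})

open scoped Classical

/-- The natural inclusion of `𝔫_H` into `𝔫_G` for graphs `H`, `G` on the same vertex
set: it matches the vertex basis vectors, and the basis vector of each edge of `H`
which is also an edge of `G` with the corresponding basis vector of `𝔫_G`. -/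
noncomputable def inclFun (H G : SimpleGraph V) (x : Niln H) : Niln G := fun b =>
  match b with
  | Sum.inl v => x (Sum.inl v)
  | Sum.inr e =>
      if h : (e : Sym2 V) ∈ H.edgeSet then x (Sum.inr ⟨(e : Sym2 V), h⟩) else 0

end GraphLie

/-! The bracket of `𝔫_G` splits as the bracket of `𝔫_B`, included in `𝔫_G`, plus one term
per triple `(u, v, w)`, its component along the two added edges `uv` and `uw`. The extension
`J̃` respects this splitting, so its Nijenhuis tensor is the inclusion of that of `J`, which
vanishes, plus one term per triple. Each of these vanishes identically in `x` and `y`: it only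
involves the `u`-, `v`- and `w`-coordinates, `J̃` acts on the `v`- and `w`-coordinates as
`(J̃x)_v = -x_w`, `(J̃x)_w = x_v` (an adapted structure is a signed permutation with square
`-1`, hence skew-symmetric), and the signs in the definition of `J̃` are exactly those making
`J̃ [u, v] = [u, w]`. -/

namespace GraphLie

section LieAlgebra

variable {V : Type*} [LinearOrder V] {G : SimpleGraph V}

theorem Niln.linearMap_ext [Fintype V] {M : Type*} [AddCommGroup M] [Module ℝ M]
    {f g : Niln G →ₗ[ℝ] M} (h : ∀ b, f (basisVec G b) = g (basisVec G b)) : f = g :=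
  (Pi.basisFun ℝ _).ext fun b => by rw [Pi.basisFun_apply]; exact h b

theorem vtx_apply_inl (i j : V) : vtx G i (Sum.inl j) = if j = i then 1 else 0 := by
  simp [vtx, Pi.single_apply]

variable [DecidableRel G.Adj]

def orientation (i j : V) : ℝ := if i < j then 1 else -1

theorem orientation_mul_self (i j : V) : orientation i j * orientation i j = 1 := by
  unfold orientation; split_ifs <;> norm_num

theorem bracketVtx_of_adj {i j : V} (h : G.Adj i j) :
    bracketVtx G i j = orientation i j • edg G ⟨s(i, j), G.mem_edgeSet.mpr h⟩ := by
  unfold bracketVtx orientation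
  split_ifs <;> simp

theorem bracketVtx_of_not_adj {i j : V} (h : ¬ G.Adj i j) : bracketVtx G i j = 0 := dif_neg h

theorem bracketVtx_swap (i j : V) : bracketVtx G j i = -bracketVtx G i j := by
  by_cases h : G.Adj i j
  · have hs : (⟨s(j, i), G.mem_edgeSet.mpr h.symm⟩ : G.edgeSet) =
        ⟨s(i, j), G.mem_edgeSet.mpr h⟩ := Subtype.ext Sym2.eq_swap
    rw [bracketVtx_of_adj h, bracketVtx_of_adj h.symm, hs, ← neg_smul]
    unfold orientation
    rcases h.ne.lt_or_gt with hij | hji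
    · simp [hij, hij.not_gt]
    · simp [hji, hji.not_gt]
  · rw [bracketVtx_of_not_adj h, bracketVtx_of_not_adj (fun h' => h h'.symm), neg_zero]

noncomputable def edgeBracket (a b : V) (x y : Niln G) : Niln G :=
  (x (Sum.inl a) * y (Sum.inl b) - x (Sum.inl b) * y (Sum.inl a)) • bracketVtx G a b

theorem edgeBracket_eq_sum [Fintype V] (a b : V) (x y : Niln G) :
    edgeBracket a b x y =
      ∑ i : V, ∑ j : V,
        (x (Sum.inl i) * y (Sum.inl j)) • edgeBracket a b (vtx G i) (vtx G j) := by
  simp [edgeBracket, vtx_apply_inl, smul_smul, ← Finset.sum_smul, mul_sub, Finset.sum_sub_distrib]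

theorem edgeBracket_vtx_vtx {a b : V} (hab : a ≠ b) (i j : V) :
    edgeBracket a b (vtx G i) (vtx G j) = if s(i, j) = s(a, b) then bracketVtx G i j else 0 := by
  simp only [edgeBracket, vtx_apply_inl, Sym2.eq_iff]
  by_cases h1 : i = a ∧ j = b
  · obtain ⟨rfl, rfl⟩ := h1
    simp [hab.symm]
  by_cases h2 : i = b ∧ j = a
  · obtain ⟨rfl, rfl⟩ := h2
    simp [hab, bracketVtx_swap i j]
  · rw [if_neg (by tauto : ¬(i = a ∧ j = b ∨ i = b ∧ j = a))]
    split_ifs <;> simp_all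

def tripleSign (t : V × V × V) : ℝ :=
  if (t.1 < t.2.1 ∧ t.1 < t.2.2) ∨ (t.2.1 < t.1 ∧ t.2.2 < t.1) then 1 else -1

theorem tripleSign_eq_orientation_mul {t : V × V × V} (hv : t.1 ≠ t.2.1) (hw : t.1 ≠ t.2.2) :
    tripleSign t = orientation t.1 t.2.1 * orientation t.1 t.2.2 := by
  unfold tripleSign orientation
  rcases hv.lt_or_gt with hv | hv <;> rcases hw.lt_or_gt with hw | hw <;>
    simp [hv, hw, hv.not_gt, hw.not_gt]

theorem tripleSign_mul_self (t : V × V × V) : tripleSign t * tripleSign t = 1 := by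
  unfold tripleSign; split_ifs <;> norm_num

noncomputable def tripleBracket (t : V × V × V) (x y : Niln G) : Niln G :=
  edgeBracket t.1 t.2.1 x y + edgeBracket t.1 t.2.2 x y

theorem tripleBracket_eq_sum [Fintype V] (t : V × V × V) (x y : Niln G) :
    tripleBracket t x y = ∑ i : V, ∑ j : V,
      (x (Sum.inl i) * y (Sum.inl j)) • tripleBracket t (vtx G i) (vtx G j) := by
  simp only [tripleBracket, smul_add, Finset.sum_add_distrib, ← edgeBracket_eq_sum]

end LieAlgebra

namespace AdaptedCS

variable {V : Type*} [Fintype V] [LinearOrder V] {G : SimpleGraph V} [DecidableRel G.Adj]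
  (Jc : AdaptedCS G)

theorem injective : Function.Injective Jc.J := fun x y h => by
  simpa [Jc.j_squared] using congrArg Jc.J h

theorem apply_eq_neg_of_apply_basisVec {b c : V ⊕ G.edgeSet}
    (h : Jc.J (basisVec G b) = basisVec G c) (x : Niln G) : Jc.J x b = -x c := by
  have hc : Jc.J (basisVec G c) = -basisVec G b := by rw [← h, Jc.j_squared]
  suffices LinearMap.proj b ∘ₗ Jc.J = -LinearMap.proj c from LinearMap.congr_fun this x
  refine Niln.linearMap_ext fun d => ?_
  simp only [LinearMap.coe_comp, Function.comp_apply, LinearMap.neg_apply, LinearMap.coe_proj,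
    Function.eval]
  by_cases hdc : d = c
  · subst hdc
    rw [hc]
    simp [basisVec]
  have hne : basisVec G d ≠ basisVec G c ∧ basisVec G d ≠ -basisVec G c := by
    constructor <;> intro hd <;> simpa [basisVec, hdc] using congrFun hd d
  obtain ⟨d', hd'⟩ | ⟨d', hd'⟩ := Jc.adapted d
  · obtain rfl | hdb := eq_or_ne d' b
    · exact absurd (Jc.injective (by rw [hd', map_neg, hc, neg_neg])) hne.2
    · rw [hd']
      simp [basisVec, hdc, hdb.symm]
  · obtain rfl | hdb := eq_or_ne d' b
    · exact absurd (Jc.injective (by rw [hd', hc])) hne.1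
    · rw [hd']
      simp [basisVec, hdc, hdb.symm]

end AdaptedCS

section Subgraph

variable {V : Type*} {B G : SimpleGraph V}

noncomputable def inclLin (B G : SimpleGraph V) : Niln B →ₗ[ℝ] Niln G where
  toFun := inclFun B G
  map_add' x y := by
    ext (v | e)
    · rfl
    · simp only [inclFun, Pi.add_apply]
      split_ifs <;> simp
  map_smul' c x := by
    ext (v | e)
    · rfl
    · simp only [inclFun, Pi.smul_apply, RingHom.id_apply]
      split_ifs <;> simp

theorem inclLin_apply (x : Niln B) : inclLin B G x = inclFun B G x := rfl

def edgeInclusion (h : B ≤ G) : B.edgeSet → G.edgeSet :=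
  Set.inclusion (SimpleGraph.edgeSet_mono h)

noncomputable def restrictLin (h : B ≤ G) : Niln G →ₗ[ℝ] Niln B :=
  LinearMap.funLeft ℝ ℝ (Sum.map id (edgeInclusion h))

@[simp]
theorem restrictLin_apply_inl (h : B ≤ G) (x : Niln G) (v : V) :
    restrictLin h x (Sum.inl v) = x (Sum.inl v) := rfl

theorem restrictLin_inclLin (h : B ≤ G) (x : Niln B) : restrictLin h (inclLin B G x) = x := by
  ext (v | e)
  · rfl
  · simp [restrictLin, LinearMap.funLeft_apply, inclLin_apply, inclFun, edgeInclusion]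

variable [LinearOrder V]

theorem restrictLin_edg_of_not_mem (h : B ≤ G) (e : G.edgeSet)
    (he : (e : Sym2 V) ∉ B.edgeSet) : restrictLin h (edg G e) = 0 := by
  ext (v | f)
  · simp [edg]
  · have : edgeInclusion h f ≠ e := fun hf => he (hf ▸ f.2)
    simp [restrictLin, LinearMap.funLeft_apply, edg, this]

theorem inclLin_basisVec (h : B ≤ G) (b : V ⊕ B.edgeSet) :
    inclLin B G (basisVec B b) = basisVec G (Sum.map id (edgeInclusion h) b) := by
  ext (v | e)
  · cases b <;> simp [inclLin_apply, inclFun, basisVec, Pi.single_apply]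
  · rcases b with w | f
    · simp [inclLin_apply, inclFun, basisVec]
    · simp only [inclLin_apply, inclFun, basisVec, Sum.map_inr, Pi.single_apply, Sum.inr.injEq]
      split_ifs <;> simp_all [edgeInclusion, Subtype.ext_iff]

theorem inclLin_edg (h : B ≤ G) (e : B.edgeSet) :
    inclLin B G (edg B e) = edg G (edgeInclusion h e) :=
  inclLin_basisVec h (Sum.inr e)

theorem inclLin_vtx (v : V) : inclLin B G (vtx B v) = vtx G v := by
  ext (w | e) <;> simp [inclLin_apply, inclFun, vtx, Pi.single_apply]

theorem bracketVtx_of_le [DecidableRel B.Adj] [DecidableRel G.Adj] (h : B ≤ G) {i j : V}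
    (hij : B.Adj i j) : bracketVtx G i j = inclLin B G (bracketVtx B i j) := by
  rw [bracketVtx_of_adj hij, bracketVtx_of_adj (h hij), map_smul, inclLin_edg h]
  rfl

end Subgraph

section Expansion

variable {V : Type*} [Fintype V] [LinearOrder V] {B : SimpleGraph V} [DecidableRel B.Adj]

structure IsExpansion (Jb : AdaptedCS B) (T : Finset (V × V × V)) (G : SimpleGraph V) :
    Prop where
  apply_vtx : ∀ t ∈ T, Jb.J (vtx B t.2.1) = vtx B t.2.2
  not_mem_edgeSet : ∀ t ∈ T, s(t.1, t.2.1) ∉ B.edgeSet ∧ s(t.1, t.2.2) ∉ B.edgeSet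
  edge_ne : ∀ t ∈ T, s(t.1, t.2.1) ≠ s(t.1, t.2.2)
  disjoint : ∀ t ∈ T, ∀ t' ∈ T, t ≠ t' →
    ({s(t.1, t.2.1), s(t.1, t.2.2)} : Set (Sym2 V)) ∩ {s(t'.1, t'.2.1), s(t'.1, t'.2.2)} = ∅
  adj_iff : ∀ a b : V, G.Adj a b ↔
    (B.Adj a b ∨ ∃ t ∈ T, s(a, b) = s(t.1, t.2.1) ∨ s(a, b) = s(t.1, t.2.2))

namespace IsExpansion

variable {Jb : AdaptedCS B} {T : Finset (V × V × V)} {G : SimpleGraph V} (H : IsExpansion Jb T G)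
include H

theorem le : B ≤ G := fun a b h => (H.adj_iff a b).2 (Or.inl h)

theorem adj_fst {t : V × V × V} (ht : t ∈ T) : G.Adj t.1 t.2.1 :=
  (H.adj_iff _ _).2 (Or.inr ⟨t, ht, Or.inl rfl⟩)

theorem adj_snd {t : V × V × V} (ht : t ∈ T) : G.Adj t.1 t.2.2 :=
  (H.adj_iff _ _).2 (Or.inr ⟨t, ht, Or.inr rfl⟩)

theorem eq_of_mem_of_mem {t t' : V × V × V} (ht : t ∈ T) (ht' : t' ∈ T) {e : Sym2 V}
    (he : e ∈ ({s(t.1, t.2.1), s(t.1, t.2.2)} : Set (Sym2 V)))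
    (he' : e ∈ ({s(t'.1, t'.2.1), s(t'.1, t'.2.2)} : Set (Sym2 V))) : t = t' := by
  by_contra hne
  exact Set.eq_empty_iff_forall_notMem.1 (H.disjoint t ht t' ht' hne) e ⟨he, he'⟩

theorem fst_edge_ne_snd_edge {t t' : V × V × V} (ht : t ∈ T) (ht' : t' ∈ T) :
    s(t.1, t.2.1) ≠ s(t'.1, t'.2.2) := fun h => by
  obtain rfl := H.eq_of_mem_of_mem ht ht' (Or.inl rfl) (Or.inr h)
  exact H.edge_ne t ht h

open Classical in
noncomputable def extJBasis : V ⊕ G.edgeSet → Niln G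
  | Sum.inl v => inclLin B G (Jb.J (vtx B v))
  | Sum.inr e =>
    if he : (e : Sym2 V) ∈ B.edgeSet then inclLin B G (Jb.J (edg B ⟨e, he⟩))
    else if h₁ : ∃ t ∈ T, (e : Sym2 V) = s(t.1, t.2.1) then
      tripleSign h₁.choose • edg G ⟨_, G.mem_edgeSet.2 (H.adj_snd h₁.choose_spec.1)⟩
    else if h₂ : ∃ t ∈ T, (e : Sym2 V) = s(t.1, t.2.2) then
      -tripleSign h₂.choose • edg G ⟨_, G.mem_edgeSet.2 (H.adj_fst h₂.choose_spec.1)⟩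
    else 0

noncomputable def extJ : Niln G →ₗ[ℝ] Niln G := (Pi.basisFun ℝ _).constr ℝ H.extJBasis

theorem extJ_basisVec (b : V ⊕ G.edgeSet) : H.extJ (basisVec G b) = H.extJBasis b := by
  rw [basisVec, ← Pi.basisFun_apply]
  exact (Pi.basisFun ℝ _).constr_basis ℝ _ b

theorem extJ_inclLin (z : Niln B) : H.extJ (inclLin B G z) = inclLin B G (Jb.J z) := by
  suffices H.extJ ∘ₗ inclLin B G = inclLin B G ∘ₗ Jb.J from LinearMap.congr_fun this z
  refine Niln.linearMap_ext fun b => ?_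
  rw [LinearMap.comp_apply, LinearMap.comp_apply, inclLin_basisVec H.le, extJ_basisVec]
  rcases b with v | e
  · rfl
  · exact dif_pos e.2

theorem extJ_edg_fst {t : V × V × V} (ht : t ∈ T) {e f : G.edgeSet}
    (he : (e : Sym2 V) = s(t.1, t.2.1)) (hf : (f : Sym2 V) = s(t.1, t.2.2)) :
    H.extJ (edg G e) = tripleSign t • edg G f := by
  have h₁ : ∃ t ∈ T, (e : Sym2 V) = s(t.1, t.2.1) := ⟨t, ht, he⟩
  have hchoose : h₁.choose = t :=
    H.eq_of_mem_of_mem h₁.choose_spec.1 ht (Or.inl rfl)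
      (Or.inl (h₁.choose_spec.2.symm.trans he))
  rw [edg, ← basisVec, extJ_basisVec, extJBasis, dif_neg (he ▸ (H.not_mem_edgeSet t ht).1),
    dif_pos h₁]
  congr 1
  · rw [hchoose]
  · exact congrArg (edg G) (Subtype.ext (by simp [hf, hchoose]))

theorem extJ_edg_snd {t : V × V × V} (ht : t ∈ T) {e f : G.edgeSet}
    (he : (e : Sym2 V) = s(t.1, t.2.2)) (hf : (f : Sym2 V) = s(t.1, t.2.1)) :
    H.extJ (edg G e) = -tripleSign t • edg G f := by
  have h₁ : ¬ ∃ t ∈ T, (e : Sym2 V) = s(t.1, t.2.1) := fun ⟨t', ht', he'⟩ =>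
    H.fst_edge_ne_snd_edge ht' ht (he'.symm.trans he)
  have h₂ : ∃ t ∈ T, (e : Sym2 V) = s(t.1, t.2.2) := ⟨t, ht, he⟩
  have hchoose : h₂.choose = t :=
    H.eq_of_mem_of_mem h₂.choose_spec.1 ht (Or.inr rfl)
      (Or.inr (h₂.choose_spec.2.symm.trans he))
  rw [edg, ← basisVec, extJ_basisVec, extJBasis, dif_neg (he ▸ (H.not_mem_edgeSet t ht).2),
    dif_neg h₁, dif_pos h₂]
  congr 1
  · rw [hchoose]
  · exact congrArg (edg G) (Subtype.ext (by simp [hf, hchoose]))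

theorem basisVec_cases (b : V ⊕ G.edgeSet) :
    (∃ b', basisVec G b = inclLin B G (basisVec B b')) ∨
      ∃ t ∈ T, ∃ e f : G.edgeSet, (e : Sym2 V) = s(t.1, t.2.1) ∧
        (f : Sym2 V) = s(t.1, t.2.2) ∧ (b = Sum.inr e ∨ b = Sum.inr f) := by
  rcases b with v | ⟨e, he⟩
  · exact Or.inl ⟨Sum.inl v, (inclLin_basisVec H.le (Sum.inl v)).symm⟩
  by_cases hB : e ∈ B.edgeSet
  · exact Or.inl ⟨Sum.inr ⟨e, hB⟩, (inclLin_basisVec H.le (Sum.inr ⟨e, hB⟩)).symm⟩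
  right
  induction e with | h a b => ?_
  obtain hab | ⟨t, ht, hab | hab⟩ := (H.adj_iff a b).1 he
  · exact absurd hab hB
  · exact ⟨t, ht, ⟨_, he⟩, ⟨_, G.mem_edgeSet.2 (H.adj_snd ht)⟩, hab, rfl, Or.inl rfl⟩
  · exact ⟨t, ht, ⟨_, G.mem_edgeSet.2 (H.adj_fst ht)⟩, ⟨_, he⟩, rfl, hab, Or.inr rfl⟩

theorem extJ_extJ (x : Niln G) : H.extJ (H.extJ x) = -x := by
  suffices H.extJ ∘ₗ H.extJ = -LinearMap.id from LinearMap.congr_fun this x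
  refine Niln.linearMap_ext fun b => ?_
  simp only [LinearMap.comp_apply, LinearMap.neg_apply, LinearMap.id_apply]
  obtain ⟨b', hb⟩ | ⟨t, ht, e, f, he, hf, rfl | rfl⟩ := H.basisVec_cases b
  · rw [hb, H.extJ_inclLin, H.extJ_inclLin, Jb.j_squared, map_neg]
  · change H.extJ (H.extJ (edg G e)) = -edg G e
    rw [H.extJ_edg_fst ht he hf, map_smul, H.extJ_edg_snd ht hf he, smul_smul, mul_neg,
      tripleSign_mul_self, neg_one_smul]
  · change H.extJ (H.extJ (edg G f)) = -edg G f
    rw [H.extJ_edg_snd ht hf he, map_smul, H.extJ_edg_fst ht he hf, smul_smul, neg_mul,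
      tripleSign_mul_self, neg_one_smul]

theorem restrictLin_extJ (x : Niln G) :
    restrictLin H.le (H.extJ x) = Jb.J (restrictLin H.le x) := by
  suffices restrictLin H.le ∘ₗ H.extJ = Jb.J ∘ₗ restrictLin H.le from
    LinearMap.congr_fun this x
  refine Niln.linearMap_ext fun b => ?_
  simp only [LinearMap.comp_apply]
  obtain ⟨b', hb⟩ | ⟨t, ht, e, f, he, hf, rfl | rfl⟩ := H.basisVec_cases b
  · rw [hb, H.extJ_inclLin, restrictLin_inclLin, restrictLin_inclLin]
  · change restrictLin H.le (H.extJ (edg G e)) = Jb.J (restrictLin H.le (edg G e))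
    rw [H.extJ_edg_fst ht he hf, map_smul, restrictLin_edg_of_not_mem H.le f,
      restrictLin_edg_of_not_mem H.le e, smul_zero, map_zero]
    · exact he ▸ (H.not_mem_edgeSet t ht).1
    · exact hf ▸ (H.not_mem_edgeSet t ht).2
  · change restrictLin H.le (H.extJ (edg G f)) = Jb.J (restrictLin H.le (edg G f))
    rw [H.extJ_edg_snd ht hf he, map_smul, restrictLin_edg_of_not_mem H.le e,
      restrictLin_edg_of_not_mem H.le f, smul_zero, map_zero]
    · exact hf ▸ (H.not_mem_edgeSet t ht).2
    · exact he ▸ (H.not_mem_edgeSet t ht).1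

theorem extJ_adapted (b : V ⊕ G.edgeSet) :
    (∃ b', H.extJ (basisVec G b) = basisVec G b') ∨
      ∃ b', H.extJ (basisVec G b) = -basisVec G b' := by
  obtain ⟨b', hb⟩ | ⟨t, ht, e, f, he, hf, rfl | rfl⟩ := H.basisVec_cases b
  · rw [hb, H.extJ_inclLin]
    obtain ⟨c, hc⟩ | ⟨c, hc⟩ := Jb.adapted b'
    · exact Or.inl ⟨_, by rw [hc, inclLin_basisVec H.le]⟩
    · exact Or.inr ⟨_, by rw [hc, map_neg, inclLin_basisVec H.le]⟩
  · change (∃ b', H.extJ (edg G e) = _) ∨ ∃ b', H.extJ (edg G e) = _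
    rw [H.extJ_edg_fst ht he hf]
    unfold tripleSign
    split_ifs
    · exact Or.inl ⟨Sum.inr f, one_smul ℝ _⟩
    · exact Or.inr ⟨Sum.inr f, neg_one_smul ℝ _⟩
  · change (∃ b', H.extJ (edg G f) = _) ∨ ∃ b', H.extJ (edg G f) = _
    rw [H.extJ_edg_snd ht hf he]
    unfold tripleSign
    split_ifs
    · exact Or.inr ⟨Sum.inr e, neg_one_smul ℝ _⟩
    · exact Or.inl ⟨Sum.inr e, by rw [neg_neg, one_smul]; rfl⟩

theorem extJ_apply_snd {t : V × V × V} (ht : t ∈ T) (x : Niln G) :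
    H.extJ x (Sum.inl t.2.1) = -x (Sum.inl t.2.2) :=
  (congrFun (H.restrictLin_extJ x) _).trans
    (Jb.apply_eq_neg_of_apply_basisVec (H.apply_vtx t ht) _)

theorem extJ_apply_thd {t : V × V × V} (ht : t ∈ T) (x : Niln G) :
    H.extJ x (Sum.inl t.2.2) = x (Sum.inl t.2.1) := by
  simpa [H.extJ_extJ] using (H.extJ_apply_snd ht (H.extJ x)).symm

variable [DecidableRel G.Adj]

theorem extJ_bracketVtx {t : V × V × V} (ht : t ∈ T) :
    H.extJ (bracketVtx G t.1 t.2.1) = bracketVtx G t.1 t.2.2 := by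
  rw [bracketVtx_of_adj (H.adj_fst ht), bracketVtx_of_adj (H.adj_snd ht), map_smul,
    H.extJ_edg_fst ht (e := ⟨_, G.mem_edgeSet.2 (H.adj_fst ht)⟩)
      (f := ⟨_, G.mem_edgeSet.2 (H.adj_snd ht)⟩) rfl rfl, smul_smul,
    tripleSign_eq_orientation_mul (H.adj_fst ht).ne (H.adj_snd ht).ne, ← mul_assoc,
    orientation_mul_self, one_mul]

theorem bracketVtx_eq (i j : V) :
    bracketVtx G i j =
      inclLin B G (bracketVtx B i j) + ∑ t ∈ T, tripleBracket t (vtx G i) (vtx G j) := by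
  have hsum : ∀ t ∈ T, tripleBracket t (vtx G i) (vtx G j) =
      (if s(i, j) = s(t.1, t.2.1) then bracketVtx G i j else 0) +
        (if s(i, j) = s(t.1, t.2.2) then bracketVtx G i j else 0) := fun t ht => by
    rw [tripleBracket, edgeBracket_vtx_vtx (H.adj_fst ht).ne, edgeBracket_vtx_vtx (H.adj_snd ht).ne]
  rw [Finset.sum_congr rfl hsum]
  by_cases hnew : ∃ t ∈ T, s(i, j) = s(t.1, t.2.1) ∨ s(i, j) = s(t.1, t.2.2)
  · obtain ⟨t, ht, hij⟩ := hnew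
    have hB : ¬ B.Adj i j := fun h => by
      rcases hij with hij | hij
      · exact (H.not_mem_edgeSet t ht).1 (hij ▸ h)
      · exact (H.not_mem_edgeSet t ht).2 (hij ▸ h)
    rw [bracketVtx_of_not_adj hB, map_zero, zero_add, Finset.sum_eq_single_of_mem t ht]
    · rcases hij with hij | hij
      · rw [if_pos hij, if_neg (hij ▸ H.edge_ne t ht), add_zero]
      · rw [if_neg (hij ▸ (H.edge_ne t ht).symm), if_pos hij, zero_add]
    · intro t' ht' hne
      have hij' : s(i, j) ∈ ({s(t.1, t.2.1), s(t.1, t.2.2)} : Set (Sym2 V)) := hij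
      rw [if_neg fun h => hne (H.eq_of_mem_of_mem ht' ht (Or.inl h) hij'),
        if_neg fun (h : s(i, j) = _) => hne (H.eq_of_mem_of_mem ht' ht (Or.inr h) hij'),
        add_zero]
  · simp only [not_exists, not_and, not_or] at hnew
    rw [Finset.sum_eq_zero fun t ht => by simp [hnew t ht], add_zero]
    by_cases hB : B.Adj i j
    · exact bracketVtx_of_le H.le hB
    · have hG : ¬ G.Adj i j := fun h => by
        obtain hB' | ⟨t, ht, hij⟩ := (H.adj_iff i j).1 h
        · exact hB hB'
        · exact hij.elim (hnew t ht).1 (hnew t ht).2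
      rw [bracketVtx_of_not_adj hG, bracketVtx_of_not_adj hB, map_zero]

theorem bracket_eq (x y : Niln G) :
    bracket G x y = inclLin B G (bracket B (restrictLin H.le x) (restrictLin H.le y)) +
      ∑ t ∈ T, tripleBracket t x y := by
  simp only [bracket, H.bracketVtx_eq, restrictLin_apply_inl, smul_add, Finset.sum_add_distrib,
    map_sum, map_smul, Finset.smul_sum, tripleBracket_eq_sum (t := _) x y]
  exact congrArg _ ((Finset.sum_congr rfl fun i _ => Finset.sum_comm).trans Finset.sum_comm)

theorem nijenhuis_tripleBracket {t : V × V × V} (ht : t ∈ T) (x y : Niln G) :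
    tripleBracket t x y +
        H.extJ (tripleBracket t (H.extJ x) y + tripleBracket t x (H.extJ y)) -
      tripleBracket t (H.extJ x) (H.extJ y) = 0 := by
  have hJ' : H.extJ (bracketVtx G t.1 t.2.2) = -bracketVtx G t.1 t.2.1 := by
    rw [← H.extJ_bracketVtx ht, H.extJ_extJ]
  simp only [tripleBracket, edgeBracket, H.extJ_apply_snd ht, H.extJ_apply_thd ht, map_add,
    map_smul, H.extJ_bracketVtx ht, hJ']
  module

theorem integrable (x y : Niln G) :
    bracket G x y + H.extJ (bracket G (H.extJ x) y + bracket G x (H.extJ y)) -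
      bracket G (H.extJ x) (H.extJ y) = 0 := by
  have hB := congrArg (inclLin B G) (Jb.integrable (restrictLin H.le x) (restrictLin H.le y))
  have hT := Finset.sum_eq_zero fun t ht => H.nijenhuis_tripleBracket ht x y
  simp only [map_add, map_sub, map_zero, Finset.sum_add_distrib, Finset.sum_sub_distrib]
    at hB hT
  simp only [H.bracket_eq, H.restrictLin_extJ, map_add, map_sum, H.extJ_inclLin]
  linear_combination (norm := module) hB + hT

noncomputable def toAdaptedCS : AdaptedCS G where
  J := H.extJ
  j_squared := H.extJ_extJ
  integrable := H.integrable
  adapted := H.extJ_adapted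

end IsExpansion

end Expansion

variable {V : Type*} [Fintype V] [LinearOrder V]

theorem statement14_general (B : SimpleGraph V) [DecidableRel B.Adj] (Jb : AdaptedCS B)
    (T : Finset (V × V × V))
    (hJ : ∀ t ∈ T, Jb.J (vtx B t.2.1) = vtx B t.2.2)
    (hnew : ∀ t ∈ T, s(t.1, t.2.1) ∉ B.edgeSet ∧ s(t.1, t.2.2) ∉ B.edgeSet)
    (hpair : ∀ t ∈ T, s(t.1, t.2.1) ≠ s(t.1, t.2.2))
    (hdist : ∀ t ∈ T, ∀ t' ∈ T, t ≠ t' →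
      ({s(t.1, t.2.1), s(t.1, t.2.2)} : Set (Sym2 V)) ∩
        {s(t'.1, t'.2.1), s(t'.1, t'.2.2)} = ∅)
    (G : SimpleGraph V) [DecidableRel G.Adj]
    (hG : ∀ a b : V, G.Adj a b ↔
      (B.Adj a b ∨ ∃ t ∈ T, s(a, b) = s(t.1, t.2.1) ∨ s(a, b) = s(t.1, t.2.2))) :
    ∃ Jt : AdaptedCS G,
      (∀ v : V, Jt.J (vtx G v) = inclFun B G (Jb.J (vtx B v))) ∧
      (∀ e : B.edgeSet, ∀ e' : G.edgeSet, (e : Sym2 V) = (e' : Sym2 V) →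
        Jt.J (edg G e') = inclFun B G (Jb.J (edg B e))) ∧
      (∀ t ∈ T, ∀ e f : G.edgeSet,
        (e : Sym2 V) = s(t.1, t.2.1) → (f : Sym2 V) = s(t.1, t.2.2) →
        Jt.J (edg G e) =
          (if (t.1 < t.2.1 ∧ t.1 < t.2.2) ∨ (t.2.1 < t.1 ∧ t.2.2 < t.1)
           then edg G f else - edg G f)) := by
  have H : IsExpansion Jb T G := ⟨hJ, hnew, hpair, hdist, hG⟩
  refine ⟨H.toAdaptedCS, fun v => ?_, fun e e' he => ?_, fun t ht e f he hf => ?_⟩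
  · rw [← inclLin_vtx v]
    exact H.extJ_inclLin _
  · rw [show e' = edgeInclusion H.le e from Subtype.ext he.symm, ← inclLin_edg H.le]
    exact H.extJ_inclLin _
  · change H.extJ (edg G e) = _
    rw [H.extJ_edg_fst ht he hf, tripleSign]
    split_ifs <;> simp

/-- Let `B` be a basic graph with an adapted complex structure `J`,
and let `B̃` (here: `G`) be an expansion of `B`, obtained by adding, for a family `T` of
triples `(u, v, w)` with `w = Jv` and `u ∉ {v, w}`, the pairs of edges `uv` and `uw`
(all the added edges being new and pairwise distinct).  Then the almost complex
structure `J̃` extending `J` (keeping `J` on the vertices and the old edges, and with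
`J̃ e_{i,k} = ± e_{j,k}` on each added pair of edges, the sign depending on the position
of `k` relative to `i` and `j` in the labeling) is integrable; hence it is an adapted
complex structure on `B̃` extending `J`. -/
theorem statement14 (B : SimpleGraph V) [DecidableRel B.Adj] (Jb : AdaptedCS B)
    (hB : IsBasic B) (T : Finset (V × V × V))
    (hJ : ∀ t ∈ T, Jb.J (vtx B t.2.1) = vtx B t.2.2)
    (hu : ∀ t ∈ T, t.1 ≠ t.2.1 ∧ t.1 ≠ t.2.2)
    (hnew : ∀ t ∈ T, s(t.1, t.2.1) ∉ B.edgeSet ∧ s(t.1, t.2.2) ∉ B.edgeSet)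
    (hpair : ∀ t ∈ T, s(t.1, t.2.1) ≠ s(t.1, t.2.2))
    (hdist : ∀ t ∈ T, ∀ t' ∈ T, t ≠ t' →
      ({s(t.1, t.2.1), s(t.1, t.2.2)} : Set (Sym2 V)) ∩
        {s(t'.1, t'.2.1), s(t'.1, t'.2.2)} = ∅)
    (G : SimpleGraph V) [DecidableRel G.Adj]
    (hG : ∀ a b : V, G.Adj a b ↔
      (B.Adj a b ∨ ∃ t ∈ T, s(a, b) = s(t.1, t.2.1) ∨ s(a, b) = s(t.1, t.2.2))) :
    ∃ Jt : AdaptedCS G,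
      (∀ v : V, Jt.J (vtx G v) = inclFun B G (Jb.J (vtx B v))) ∧
      (∀ e : B.edgeSet, ∀ e' : G.edgeSet, (e : Sym2 V) = (e' : Sym2 V) →
        Jt.J (edg G e') = inclFun B G (Jb.J (edg B e))) ∧
      (∀ t ∈ T, ∀ e f : G.edgeSet,
        (e : Sym2 V) = s(t.1, t.2.1) → (f : Sym2 V) = s(t.1, t.2.2) →
        Jt.J (edg G e) =
          (if (t.1 < t.2.1 ∧ t.1 < t.2.2) ∨ (t.2.1 < t.1 ∧ t.2.2 < t.1)
           then edg G f else - edg G f)) :=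
  statement14_general B Jb T hJ hnew hpair hdist G hG

end GraphLie
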